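/- arXiv:2401.08153 — 2 statements merged into one kernel-verified Lean document; each statement's English description precedes it below -/
import Mathlib

section
/- Let E, F, P ∈ ℝ^{N×N} and suppose the 2N×2N block matrix [[E + Eᵀ − P, Fᵀ],[F, P]] is positive definite. Then E is invertible and the matrix E⁻¹ F is Schur stable. -/
/-!
Let `Q` be the block matrix. If `E v = 0` with `v ≠ 0`, the form of `Q` at `(v, 0)` equals
`-vᵀ P v < 0`, so `E` is invertible. If `E⁻¹ F v = μ v`, then `F v = μ E v`, and at `(μ̄ v, -v)`
the form of the complexification of `Q` loses every term involving `E` and `F`, leaving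
`(1 - |μ|²) v* P v`. Both this and `v* P v` are positive, so `|μ| < 1`.
-/

open Matrix

/-- A real square matrix is Schur stable if every complex eigenvalue has modulus < 1. -/
def SchurStable {N : ℕ} (A : Matrix (Fin N) (Fin N) ℝ) : Prop :=
  ∀ μ ∈ spectrum ℂ (A.map Complex.ofReal), ‖μ‖ < 1

namespace Matrix

variable {R n m : Type*} [Fintype n] [Fintype m]

lemma star_dotProduct_conjTranspose_mulVec [CommSemiring R] [StarRing R] (A : Matrix n n R)
    (v : n → R) : star v ⬝ᵥ (Aᴴ *ᵥ v) = star (star v ⬝ᵥ (A *ᵥ v)) := by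
  rw [star_dotProduct, star_mulVec, conjTranspose_conjTranspose, dotProduct_mulVec]

lemma star_sumElim_dotProduct_fromBlocks_mulVec [Semiring R] [StarRing R] (A : Matrix n n R)
    (B : Matrix n m R) (C : Matrix m n R) (D : Matrix m m R) (x : n → R) (y : m → R) :
    star (Sum.elim x y) ⬝ᵥ (fromBlocks A B C D *ᵥ Sum.elim x y) =
      star x ⬝ᵥ (A *ᵥ x) + star x ⬝ᵥ (B *ᵥ y) + (star y ⬝ᵥ (C *ᵥ x) + star y ⬝ᵥ (D *ᵥ y)) := by
  rw [Function.star_sumElim, fromBlocks_mulVec, sumElim_dotProduct_sumElim, dotProduct_add,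
    dotProduct_add, Sum.elim_comp_inl, Sum.elim_comp_inr]

lemma star_dotProduct_fromBlocks_mulVec_of_mulVec_eq_smul [CommRing R] [StarRing R]
    (E F P : Matrix n n R) {μ : R} {v : n → R} (hv : F *ᵥ v = μ • E *ᵥ v) :
    star (Sum.elim (star μ • v) (-v)) ⬝ᵥ
        (fromBlocks (E + Eᴴ - P) Fᴴ F P *ᵥ Sum.elim (star μ • v) (-v)) =
      (1 - star μ * μ) * (star v ⬝ᵥ (P *ᵥ v)) := by
  rw [star_sumElim_dotProduct_fromBlocks_mulVec]
  simp only [star_smul, star_neg, star_star, add_mulVec, sub_mulVec, mulVec_smul, mulVec_neg,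
    dotProduct_add, dotProduct_sub, dotProduct_smul, smul_dotProduct, dotProduct_neg,
    neg_dotProduct, star_dotProduct_conjTranspose_mulVec, hv, smul_eq_mul, star_mul']
  ring

lemma exists_mulVec_eq_smul_of_mem_spectrum [Field R] [DecidableEq n] {A : Matrix n n R} {μ : R}
    (h : μ ∈ spectrum R A) : ∃ v ≠ 0, A *ᵥ v = μ • v := by
  rw [← spectrum_toLin', ← Module.End.hasEigenvalue_iff_mem_spectrum] at h
  obtain ⟨v, hv⟩ := h.exists_hasEigenvector
  exact ⟨v, hv.2, hv.apply_eq_smul⟩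

open scoped ComplexOrder MatrixOrder in
lemma PosDef.map_ofReal [DecidableEq n] {M : Matrix n n ℝ} (hM : M.PosDef) :
    (M.map Complex.ofReal).PosDef := by
  have hunit : IsUnit (M.map Complex.ofReal) := hM.isUnit.map Complex.ofRealHom.mapMatrix
  obtain ⟨B, rfl⟩ := CStarAlgebra.nonneg_iff_eq_star_mul_self.mp hM.posSemidef.nonneg
  have hB : (star B * B).map Complex.ofReal = (B.map Complex.ofReal)ᴴ * B.map Complex.ofReal := by
    rw [← conjTranspose_map _ fun _ ↦ (Complex.conj_ofReal _).symm]
    exact Matrix.map_mul (f := Complex.ofRealHom)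
  rw [hB] at hunit ⊢
  exact (posSemidef_conjTranspose_mul_self _).posDef_iff_isUnit.mpr hunit

section RCLike

open scoped ComplexOrder

variable {𝕜 : Type*} [RCLike 𝕜] {E F P : Matrix n n 𝕜}

lemma isUnit_of_posDef_fromBlocks [DecidableEq n]
    (h : (fromBlocks (E + Eᴴ - P) Fᴴ F P).PosDef) : IsUnit E := by
  rw [isUnit_iff_isUnit_det, isUnit_iff_ne_zero]
  intro hdet
  obtain ⟨v, hv0, hv⟩ := exists_mulVec_eq_zero_iff.mpr hdet
  have hP : 0 < star v ⬝ᵥ (P *ᵥ v) := (h.submatrix Sum.inr_injective).dotProduct_mulVec_pos hv0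
  have hQ := h.dotProduct_mulVec_pos (x := Sum.elim v 0)
    (by simp [← Sum.elim_zero_zero, Sum.elim_eq_iff, hv0])
  rw [star_sumElim_dotProduct_fromBlocks_mulVec] at hQ
  simp only [sub_mulVec, add_mulVec, hv, zero_add, dotProduct_sub,
    star_dotProduct_conjTranspose_mulVec, dotProduct_zero, star_zero, zero_sub, mulVec_zero,
    add_zero, zero_dotProduct, Left.neg_pos_iff] at hQ
  exact lt_asymm hP hQ

lemma norm_lt_one_of_posDef_fromBlocks (h : (fromBlocks (E + Eᴴ - P) Fᴴ F P).PosDef) {μ : 𝕜}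
    {v : n → 𝕜} (hv0 : v ≠ 0) (hv : F *ᵥ v = μ • E *ᵥ v) : ‖μ‖ < 1 := by
  have hP : 0 < star v ⬝ᵥ (P *ᵥ v) := (h.submatrix Sum.inr_injective).dotProduct_mulVec_pos hv0
  have hQ := h.dotProduct_mulVec_pos (x := Sum.elim (star μ • v) (-v))
    (by simp [← Sum.elim_zero_zero, Sum.elim_eq_iff, hv0])
  rw [star_dotProduct_fromBlocks_mulVec_of_mulVec_eq_smul E F P hv, RCLike.star_def,
    RCLike.conj_mul, ← RCLike.ofReal_pow, ← RCLike.ofReal_one, ← RCLike.ofReal_sub] at hQ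
  rw [RCLike.pos_iff] at hP hQ
  rw [RCLike.re_ofReal_mul] at hQ
  have hμ : ‖μ‖ ^ 2 < 1 := by nlinarith [hP.1, hQ.1]
  exact (pow_lt_one_iff_of_nonneg (norm_nonneg μ) two_ne_zero).mp hμ

end RCLike

end Matrix

theorem stmt8 {N : ℕ} (E F P : Matrix (Fin N) (Fin N) ℝ)
    (hblk : (Matrix.fromBlocks (E + Eᵀ - P) Fᵀ F P).PosDef) :
    IsUnit E ∧ SchurStable (E⁻¹ * F) := by
  have hE : IsUnit E := isUnit_of_posDef_fromBlocks (F := F) (P := P)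
    (by simpa only [conjTranspose_eq_transpose_of_trivial] using hblk)
  refine ⟨hE, fun μ hμ => ?_⟩
  obtain ⟨v, hv0, hv⟩ := exists_mulVec_eq_smul_of_mem_spectrum hμ
  have hF : F.map Complex.ofReal = E.map Complex.ofReal * (E⁻¹ * F).map Complex.ofReal :=
    calc F.map Complex.ofReal = (E * (E⁻¹ * F)).map Complex.ofReal := by
          rw [mul_nonsing_inv_cancel_left _ _ ((isUnit_iff_isUnit_det E).mp hE)]
      _ = _ := Matrix.map_mul (f := Complex.ofRealHom)
  have hcomplexify : (fromBlocks (E + Eᵀ - P) Fᵀ F P).map Complex.ofReal =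
      fromBlocks (E.map Complex.ofReal + (E.map Complex.ofReal)ᴴ - P.map Complex.ofReal)
        (F.map Complex.ofReal)ᴴ (F.map Complex.ofReal) (P.map Complex.ofReal) := by
    ext (i | i) (j | j) <;> simp
  have hblkℂ := hblk.map_ofReal
  rw [hcomplexify] at hblkℂ
  refine norm_lt_one_of_posDef_fromBlocks hblkℂ hv0 ?_
  rw [hF, ← mulVec_mulVec, hv, mulVec_smul]
end

section
/- Let f_c : ℝⁿ × ℝᵐ → ℝⁿ be C¹ and let φ : ℝⁿ → ℝᴺ be a C¹ map whose Jacobian Dφ(x) ∈ ℝ^{N×n} has full column rank n for every x, with constants a₂ ≥ a₁ > 0 such that a₁ I ≼ Dφ(x)ᵀ Dφ(x) ≼ a₂ I for all x. Suppose A ∈ ℝ^{N×N} and B ∈ ℝ^{N×m} satisfy φ(f_c(x, v)) = A φ(x) + B v for all x ∈ ℝⁿ and v ∈ ℝᵐ, and let K ∈ ℝ^{m×N} be any matrix such that A + B K is Schur stable. Then the closed-loop map g(x) := f_c(x, K φ(x)) is contracting: there exist a symmetric positive definite P ∈ ℝ^{N×N} and β ∈ (0,1) such that, with M(x) := Dφ(x)ᵀ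 P Dφ(x), Dg(x)ᵀ M(g(x)) Dg(x) − M(x) ≼ −β M(x) for all x ∈ ℝⁿ. -/
/-!
Write `S = A + B K` and `g x = f_c(x, K φ(x))`. The lift gives `φ ∘ g = S ∘ φ`, so by the chain
rule `Dφ(g x) Dg(x) = S Dφ(x)`, and the claim is the congruence by `Dφ(x)` of a discrete Lyapunov
inequality `Sᵀ P S ≼ (1 - β) P`. To find `P`, Gelfand's formula gives `‖Sᵏ‖ < 1` for some `k ≥ 1`;
the Gramian `P = ∑_{i<k} (Sⁱ)ᵀ Sⁱ ≽ I` then telescopes to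
`Sᵀ P S = P - I + (Sᵏ)ᵀ Sᵏ ≼ P - (1 - ‖Sᵏ‖²) I`, and `I` dominates a multiple of `P`.
-/

open Matrix

/-- Jacobian matrix of a map between finite-dimensional real coordinate spaces. -/
noncomputable def jac {n m : ℕ} (f : (Fin n → ℝ) → (Fin m → ℝ)) (x : Fin n → ℝ) :
    Matrix (Fin m) (Fin n) ℝ :=
  LinearMap.toMatrix' (fderiv ℝ f x).toLinearMap

open scoped MatrixOrder

attribute [local instance] frobeniusNormedAddCommGroup frobeniusNormedRing frobeniusNormedAlgebra

namespace Matrix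

variable {m n : Type*} [Fintype m] [Fintype n]

lemma transpose_mul_mul_le_transpose_mul_mul {P Q : Matrix n n ℝ} (h : P ≤ Q)
    (X : Matrix n m ℝ) : Xᵀ * P * X ≤ Xᵀ * Q * X := by
  rw [le_iff, ← Matrix.sub_mul, ← Matrix.mul_sub]
  exact (le_iff.mp h).conjTranspose_mul_mul_same X

lemma dotProduct_self_eq_norm_toLp_sq (v : n → ℝ) : v ⬝ᵥ v = ‖WithLp.toLp 2 v‖ ^ 2 := by
  rw [EuclideanSpace.norm_sq_eq]
  simp [dotProduct, sq]

lemma frobenius_norm_mulVec_le (M : Matrix m n ℝ) (v : n → ℝ) :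
    ‖WithLp.toLp 2 (M *ᵥ v)‖ ≤ ‖M‖ * ‖WithLp.toLp 2 v‖ := by
  simpa only [← frobenius_norm_replicateCol (ι := Unit), replicateCol_mulVec]
    using frobenius_norm_mul M (replicateCol Unit v)

lemma transpose_mul_self_le_frobenius_norm_sq [DecidableEq n] (M : Matrix m n ℝ) :
    Mᵀ * M ≤ (‖M‖ ^ 2) • (1 : Matrix n n ℝ) := by
  rw [le_iff, posSemidef_iff_dotProduct_mulVec]
  refine ⟨?_, fun v => ?_⟩
  · simp [IsHermitian, conjTranspose_eq_transpose_of_trivial, transpose_sub, transpose_mul]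
  · have hquad : star v ⬝ᵥ ((‖M‖ ^ 2) • 1 - Mᵀ * M) *ᵥ v
        = (‖M‖ * ‖WithLp.toLp 2 v‖) ^ 2 - ‖WithLp.toLp 2 (M *ᵥ v)‖ ^ 2 := by
      rw [sub_mulVec, dotProduct_sub, smul_mulVec, one_mulVec, dotProduct_smul,
        ← mulVec_mulVec, dotProduct_mulVec, vecMul_transpose, star_trivial,
        dotProduct_self_eq_norm_toLp_sq, dotProduct_self_eq_norm_toLp_sq, smul_eq_mul, mul_pow]
    rw [hquad, sub_nonneg]
    exact pow_le_pow_left₀ (norm_nonneg _) (frobenius_norm_mulVec_le M v) 2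

section Gramian

variable [DecidableEq n]

def finiteGramian (S : Matrix n n ℝ) (k : ℕ) : Matrix n n ℝ :=
  ∑ i ∈ Finset.range k, (S ^ i)ᵀ * S ^ i

lemma finiteGramian_succ (S : Matrix n n ℝ) (k : ℕ) :
    S.finiteGramian (k + 1) = S.finiteGramian k + (S ^ k)ᵀ * S ^ k :=
  Finset.sum_range_succ _ k

lemma transpose_mul_finiteGramian_mul_add_one (S : Matrix n n ℝ) (k : ℕ) :
    Sᵀ * S.finiteGramian k * S + 1 = S.finiteGramian k + (S ^ k)ᵀ * S ^ k := by
  induction k with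
  | zero => simp [finiteGramian]
  | succ k ih =>
    rw [finiteGramian_succ, mul_add, add_mul, add_right_comm, ih, pow_succ, transpose_mul]
    simp only [Matrix.mul_assoc]

lemma one_le_finiteGramian (S : Matrix n n ℝ) {k : ℕ} (hk : 0 < k) : 1 ≤ S.finiteGramian k := by
  obtain ⟨k, rfl⟩ := Nat.exists_eq_add_of_lt hk
  rw [zero_add, finiteGramian, Finset.sum_range_succ']
  simp only [pow_zero, transpose_one, Matrix.one_mul]
  exact le_add_of_nonneg_left <| Finset.sum_nonneg fun i _ =>
    (posSemidef_conjTranspose_mul_self (S ^ (i + 1))).nonneg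

lemma finiteGramian_le_smul_one (S : Matrix n n ℝ) (k : ℕ) :
    S.finiteGramian k ≤ (∑ i ∈ Finset.range k, ‖S ^ i‖ ^ 2) • (1 : Matrix n n ℝ) := by
  rw [finiteGramian, Finset.sum_smul]
  exact Finset.sum_le_sum fun i _ => transpose_mul_self_le_frobenius_norm_sq (S ^ i)

lemma exists_transpose_mul_mul_le_one_sub_smul {P S : Matrix n n ℝ} {c ε : ℝ} (hc : 0 < c) (hε : 0 < ε) (hPc : P ≤ c • 1)
    (hdecay : Sᵀ * P * S + ε • 1 ≤ P) :
    ∃ β : ℝ, 0 < β ∧ β < 1 ∧ Sᵀ * P * S ≤ (1 - β) • P := by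
  refine ⟨ε / (c + ε), by positivity, (div_lt_one (by positivity)).2 (by linarith), ?_⟩
  have hβc : ε / (c + ε) * c ≤ ε := by
    rw [div_mul_eq_mul_div, div_le_iff₀ (by positivity)]
    nlinarith
  have hβP : (ε / (c + ε)) • P ≤ ε • (1 : Matrix n n ℝ) := calc
    (ε / (c + ε)) • P ≤ (ε / (c + ε)) • (c • 1) := smul_le_smul_of_nonneg_left hPc (by positivity)
    _ = (ε / (c + ε) * c) • 1 := smul_smul _ _ _
    _ ≤ ε • 1 := smul_le_smul_of_nonneg_right hβc PosSemidef.one.nonneg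
  rw [sub_smul, one_smul]
  rw [← le_sub_iff_add_le] at hdecay
  exact hdecay.trans (sub_le_sub_left hβP P)

end Gramian

end Matrix

open Filter in
lemma exists_norm_pow_lt_one_of_spectrum_subset_ball {𝓐 : Type*} [NormedRing 𝓐]
    [NormedAlgebra ℂ 𝓐] [CompleteSpace 𝓐] (a : 𝓐) (h : ∀ z ∈ spectrum ℂ a, ‖z‖ < 1) :
    ∃ k : ℕ, 0 < k ∧ ‖a ^ k‖ < 1 := by
  cases subsingleton_or_nontrivial 𝓐
  · exact ⟨1, one_pos, by simp [Subsingleton.elim (a ^ 1) 0]⟩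
  have hρ : spectralRadius ℂ a < 1 := by
    simpa using spectrum.spectralRadius_lt_of_forall_lt a (r := 1)
      fun z hz => by simpa [← NNReal.coe_lt_one] using h z hz
  obtain ⟨k, hk, hk0⟩ := (((spectrum.pow_norm_pow_one_div_tendsto_nhds_spectralRadius a)
    |>.eventually_lt_const hρ).and (eventually_gt_atTop 0)).exists
  refine ⟨k, hk0, lt_of_not_ge fun h1 => ?_⟩
  rw [ENNReal.ofReal_lt_one] at hk
  exact hk.not_ge (Real.one_le_rpow h1 (by positivity))

section SchurStable

variable {N : ℕ} {S : Matrix (Fin N) (Fin N) ℝ}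

lemma SchurStable.exists_frobenius_norm_pow_lt_one (hS : SchurStable S) :
    ∃ k : ℕ, 0 < k ∧ ‖S ^ k‖ < 1 := by
  obtain ⟨k, hk, hlt⟩ := exists_norm_pow_lt_one_of_spectrum_subset_ball _ hS
  have hmap : S.map Complex.ofReal ^ k = (S ^ k).map Complex.ofReal :=
    (map_pow Complex.ofRealHom.mapMatrix S k).symm
  rw [hmap, frobenius_norm_map_eq _ _ Complex.norm_real] at hlt
  exact ⟨k, hk, hlt⟩

lemma SchurStable.exists_posDef_transpose_mul_mul_le_one_sub_smul (hS : SchurStable S) :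
    ∃ (P : Matrix (Fin N) (Fin N) ℝ) (β : ℝ), P.PosDef ∧ 0 < β ∧ β < 1 ∧
      Sᵀ * P * S ≤ (1 - β) • P := by
  obtain ⟨k, hk, hSk⟩ := hS.exists_frobenius_norm_pow_lt_one
  set G := S.finiteGramian k
  have hGpos : G.PosDef := by
    simpa using PosDef.one.add_posSemidef (le_iff.mp (S.one_le_finiteGramian hk))
  set c := ∑ i ∈ Finset.range k, ‖S ^ i‖ ^ 2
  have hGc : G ≤ (1 + c) • 1 := (S.finiteGramian_le_smul_one k).trans <|
    smul_le_smul_of_nonneg_right (le_add_of_nonneg_left zero_le_one) PosSemidef.one.nonneg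
  have hdecay : Sᵀ * G * S + (1 - ‖S ^ k‖ ^ 2) • 1 ≤ G := by
    rw [sub_smul, one_smul, ← add_sub_assoc, S.transpose_mul_finiteGramian_mul_add_one k,
      sub_le_iff_le_add]
    exact add_le_add_right (transpose_mul_self_le_frobenius_norm_sq (S ^ k)) G
  obtain ⟨β, hβ0, hβ1, hβ⟩ := exists_transpose_mul_mul_le_one_sub_smul (by positivity)
    (by nlinarith [norm_nonneg (S ^ k)]) hGc hdecay
  exact ⟨G, β, hGpos, hβ0, hβ1, hβ⟩

end SchurStable

section Jacobian

variable {n m p : ℕ}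

lemma jac_comp {f : (Fin m → ℝ) → (Fin p → ℝ)} {g : (Fin n → ℝ) → (Fin m → ℝ)}
    {x : Fin n → ℝ} (hf : DifferentiableAt ℝ f (g x)) (hg : DifferentiableAt ℝ g x) :
    jac (f ∘ g) x = jac f (g x) * jac g x := by
  rw [jac, fderiv_comp x hf hg, ContinuousLinearMap.toLinearMap_comp, LinearMap.toMatrix'_comp]
  rfl

lemma hasFDerivAt_mulVec (S : Matrix (Fin p) (Fin m) ℝ) (x : Fin m → ℝ) :
    HasFDerivAt (S *ᵥ ·) (LinearMap.toContinuousLinearMap (toLin' S)) x :=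
  (LinearMap.toContinuousLinearMap (toLin' S)).hasFDerivAt

lemma jac_mulVec (S : Matrix (Fin p) (Fin m) ℝ) (x : Fin m → ℝ) : jac (S *ᵥ ·) x = S := by
  rw [jac, (hasFDerivAt_mulVec S x).fderiv]
  exact LinearMap.toMatrix'_toLin' S

lemma jac_mul_jac_of_comp_eq_mulVec {φ : (Fin n → ℝ) → (Fin m → ℝ)}
    {g : (Fin n → ℝ) → (Fin n → ℝ)} {S : Matrix (Fin m) (Fin m) ℝ} (hφ : Differentiable ℝ φ)
    {x : Fin n → ℝ} (hg : DifferentiableAt ℝ g x) (hlift : ∀ y, φ (g y) = S *ᵥ φ y) :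
    jac φ (g x) * jac g x = S * jac φ x := by
  have hlift' : φ ∘ g = (S *ᵥ ·) ∘ φ := funext hlift
  rw [← jac_comp (hφ _) hg, hlift', jac_comp (hasFDerivAt_mulVec S _).differentiableAt (hφ x),
    jac_mulVec]

end Jacobian

theorem stmt12_general {n m N : ℕ}
    (fc : (Fin n → ℝ) → (Fin m → ℝ) → (Fin n → ℝ))
    (hfc : ContDiff ℝ 1 (fun p : (Fin n → ℝ) × (Fin m → ℝ) => fc p.1 p.2))
    (φ : (Fin n → ℝ) → (Fin N → ℝ)) (hφ : ContDiff ℝ 1 φ)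
    (A : Matrix (Fin N) (Fin N) ℝ) (B : Matrix (Fin N) (Fin m) ℝ)
    (hlift : ∀ x v, φ (fc x v) = A.mulVec (φ x) + B.mulVec v)
    (K : Matrix (Fin m) (Fin N) ℝ) (hK : SchurStable (A + B * K)) :
    ∃ (P : Matrix (Fin N) (Fin N) ℝ) (β : ℝ), P.PosDef ∧ 0 < β ∧ β < 1 ∧
      ∀ x, ((1 - β) • ((jac φ x)ᵀ * P * jac φ x)
          - (jac (fun y => fc y (K.mulVec (φ y))) x)ᵀ *
              ((jac φ (fc x (K.mulVec (φ x))))ᵀ * P * jac φ (fc x (K.mulVec (φ x)))) *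
              jac (fun y => fc y (K.mulVec (φ y))) x).PosSemidef := by
  obtain ⟨P, β, hP, hβ0, hβ1, hcontr⟩ := hK.exists_posDef_transpose_mul_mul_le_one_sub_smul
  refine ⟨P, β, hP, hβ0, hβ1, fun x => ?_⟩
  set g : (Fin n → ℝ) → (Fin n → ℝ) := fun y => fc y (K *ᵥ φ y)
  have hφd : Differentiable ℝ φ := hφ.differentiable one_ne_zero
  have hgd : Differentiable ℝ g := (hfc.differentiable one_ne_zero).comp <|
    differentiable_id.prodMk ((LinearMap.toContinuousLinearMap (toLin' K)).differentiable.comp hφd)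
  have hchain : jac φ (g x) * jac g x = (A + B * K) * jac φ x :=
    jac_mul_jac_of_comp_eq_mulVec hφd (hgd x) fun y => by rw [hlift, add_mulVec, mulVec_mulVec]
  rw [← le_iff]
  calc (jac g x)ᵀ * ((jac φ (g x))ᵀ * P * jac φ (g x)) * jac g x
      = (jac φ (g x) * jac g x)ᵀ * P * (jac φ (g x) * jac g x) := by
        simp only [transpose_mul, Matrix.mul_assoc]
    _ = (jac φ x)ᵀ * ((A + B * K)ᵀ * P * (A + B * K)) * jac φ x := by
        rw [hchain]
        simp only [transpose_mul, Matrix.mul_assoc]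
    _ ≤ (jac φ x)ᵀ * ((1 - β) • P) * jac φ x := transpose_mul_mul_le_transpose_mul_mul hcontr _
    _ = (1 - β) • ((jac φ x)ᵀ * P * jac φ x) := by rw [Matrix.mul_smul, Matrix.smul_mul]

theorem stmt12 {n m N : ℕ}
    (fc : (Fin n → ℝ) → (Fin m → ℝ) → (Fin n → ℝ))
    (hfc : ContDiff ℝ 1 (fun p : (Fin n → ℝ) × (Fin m → ℝ) => fc p.1 p.2))
    (φ : (Fin n → ℝ) → (Fin N → ℝ)) (hφ : ContDiff ℝ 1 φ)
    (hrank : ∀ x, (jac φ x).rank = n)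
    (a₁ a₂ : ℝ) (ha₁ : 0 < a₁) (ha₁₂ : a₁ ≤ a₂)
    (hlow : ∀ x, ((jac φ x)ᵀ * jac φ x - a₁ • (1 : Matrix (Fin n) (Fin n) ℝ)).PosSemidef)
    (hup : ∀ x, (a₂ • (1 : Matrix (Fin n) (Fin n) ℝ) - (jac φ x)ᵀ * jac φ x).PosSemidef)
    (A : Matrix (Fin N) (Fin N) ℝ) (B : Matrix (Fin N) (Fin m) ℝ)
    (hlift : ∀ x v, φ (fc x v) = A.mulVec (φ x) + B.mulVec v)
    (K : Matrix (Fin m) (Fin N) ℝ) (hK : SchurStable (A + B * K)) :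
    ∃ (P : Matrix (Fin N) (Fin N) ℝ) (β : ℝ), P.PosDef ∧ 0 < β ∧ β < 1 ∧
      ∀ x, ((1 - β) • ((jac φ x)ᵀ * P * jac φ x)
          - (jac (fun y => fc y (K.mulVec (φ y))) x)ᵀ *
              ((jac φ (fc x (K.mulVec (φ x))))ᵀ * P * jac φ (fc x (K.mulVec (φ x)))) *
              jac (fun y => fc y (K.mulVec (φ y))) x).PosSemidef :=
  stmt12_general fc hfc φ hφ A B hlift K hK
end
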